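/- If p and q are valuation functions (with domains of size < μ contained in λ) that coincide on dom(p) ∩ dom(q), then p and q are compatible: there is a valuation function extending both. -/

import Mathlib

open Cardinal

/-- The three values `≥`, `⊥`, "undefined" of a valuation function. -/
inductive VVal : Type
  | ge : VVal
  | perp : VVal
  | und : VVal
deriving DecidableEq

/-- A condition of the forcing `ℙ(λ,μ)`: a valuation function whose domain is a subset
`w` of (the linear order) `O` of cardinality `< μ` (only values on pairs `i < j` of
elements of `w` are relevant). -/
structure VCond (O : Type u) [LinearOrder O] (μ : Cardinal.{u}) where
  w : Set O
  small : #w < μ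
  p : O → O → VVal
  trans_ge : ∀ i j k : O, i ∈ w → j ∈ w → k ∈ w → i < j → j < k →
    p i j = VVal.ge → p j k = VVal.ge → p i k = VVal.ge
  mix1 : ∀ i j k : O, i ∈ w → j ∈ w → k ∈ w → i < j → j < k →
    p i j = VVal.perp → p i k = VVal.ge → p j k = VVal.perp
  mix2 : ∀ i j k : O, i ∈ w → j ∈ w → k ∈ w → i < j → j < k →
    p i j = VVal.ge → p i k = VVal.perp → p j k = VVal.perp
  mix3 : ∀ i j k : O, i ∈ w → j ∈ w → k ∈ w → i < j → j < k →
    p i j = VVal.perp → p j k = VVal.ge → p i k = VVal.perp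

/-- `q` extends `p` (i.e. `q ≤ p` in the forcing order, `p ⊆ q` as functions). -/
def VCond.Extends {O : Type u} [LinearOrder O] {μ : Cardinal.{u}}
    (q p : VCond O μ) : Prop :=
  p.w ⊆ q.w ∧ ∀ i ∈ p.w, ∀ j ∈ p.w, i < j → q.p i j = p.p i j

/-!
Glue `p` and `q` along their common domain. Inside `dom p` or `dom q` the relations `≥` and `⊥`
are those of `p` or `q`; for `x ∈ dom p \ dom q` and `y ∈ dom q \ dom p` put `x ≥ y` if
`x ≥ c ≥ y`, and `x ⊥ y` if `x ⊥ c ≥ y` or `c ≥ x, c ⊥ y`, for some `c ∈ dom p ∩ dom q`.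
The valuation axioms all say that `≥` is transitive and that `⊥ ∘ ≥ ⊆ ⊥`. A chain of such steps
that switches between `p` and `q` passes through the common domain, where `p` and `q` agree, so
it collapses to a chain with at most one switch; this keeps the glued relations closed under the
axioms and disjoint, and makes them restrict to `p` and `q`.
-/

namespace VCond

variable {O : Type u} [LinearOrder O] {μ : Cardinal.{u}} {r s : VCond O μ} {x y z : O}

def Ge (r : VCond O μ) (x y : O) : Prop :=
  x ∈ r.w ∧ y ∈ r.w ∧ x < y ∧ r.p x y = .ge

def Perp (r : VCond O μ) (x y : O) : Prop :=
  x ∈ r.w ∧ y ∈ r.w ∧ (x < y ∧ r.p x y = .perp ∨ y < x ∧ r.p y x = .perp)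

theorem ge_iff (hx : x ∈ r.w) (hy : y ∈ r.w) (hxy : x < y) : r.Ge x y ↔ r.p x y = .ge :=
  ⟨fun h => h.2.2.2, fun h => ⟨hx, hy, hxy, h⟩⟩

theorem perp_iff (hx : x ∈ r.w) (hy : y ∈ r.w) (hxy : x < y) :
    r.Perp x y ↔ r.p x y = .perp := by
  refine ⟨fun ⟨_, _, h⟩ => ?_, fun h => ⟨hx, hy, .inl ⟨hxy, h⟩⟩⟩
  rcases h with ⟨_, h⟩ | ⟨hyx, _⟩
  exacts [h, absurd hxy hyx.not_gt]

theorem Ge.trans (h₁ : r.Ge x y) (h₂ : r.Ge y z) : r.Ge x z :=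
  ⟨h₁.1, h₂.2.1, h₁.2.2.1.trans h₂.2.2.1,
    r.trans_ge x y z h₁.1 h₁.2.1 h₂.2.1 h₁.2.2.1 h₂.2.2.1 h₁.2.2.2 h₂.2.2.2⟩

theorem Perp.symm (h : r.Perp x y) : r.Perp y x :=
  ⟨h.2.1, h.1, h.2.2.symm⟩

theorem Perp.not_ge (hp : r.Perp x y) (hg : r.Ge x y) : False := by
  obtain ⟨-, -, ⟨-, hperp⟩ | ⟨hyx, -⟩⟩ := hp
  · exact VVal.noConfusion (hperp.symm.trans hg.2.2.2)
  · exact hyx.not_gt hg.2.2.1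

/-- The three mixed axioms `mix1`, `mix2`, `mix3` are the three relative positions of `x`
and `z` around `y`. -/
theorem Perp.trans_ge (hp : r.Perp x y) (hg : r.Ge y z) : r.Perp x z := by
  obtain ⟨hx, hy, hxy⟩ := hp
  obtain ⟨-, hz, hyz, hge⟩ := hg
  refine ⟨hx, hz, ?_⟩
  rcases hxy with ⟨hxy, hperp⟩ | ⟨hyx, hperp⟩
  · exact .inl ⟨hxy.trans hyz, r.mix3 x y z hx hy hz hxy hyz hperp hge⟩
  rcases lt_trichotomy x z with hxz | rfl | hzx
  · exact .inl ⟨hxz, r.mix1 y x z hy hx hz hyx hxz hperp hge⟩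
  · exact VVal.noConfusion (hperp.symm.trans hge)
  · exact .inr ⟨hzx, r.mix2 y z x hy hz hx hyz hzx hge hperp⟩

def Agree (r s : VCond O μ) : Prop :=
  ∀ i ∈ r.w ∩ s.w, ∀ j ∈ r.w ∩ s.w, i < j → r.p i j = s.p i j

theorem Agree.symm (h : Agree r s) : Agree s r :=
  fun i hi j hj hij => (h i ⟨hi.2, hi.1⟩ j ⟨hj.2, hj.1⟩ hij).symm

theorem Ge.of_agree (hag : Agree r s) (h : s.Ge x y) (hx : x ∈ r.w) (hy : y ∈ r.w) :
    r.Ge x y :=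
  ⟨hx, hy, h.2.2.1, (hag x ⟨hx, h.1⟩ y ⟨hy, h.2.1⟩ h.2.2.1).trans h.2.2.2⟩

theorem Perp.of_agree (hag : Agree r s) (h : s.Perp x y) (hx : x ∈ r.w) (hy : y ∈ r.w) :
    r.Perp x y := by
  obtain ⟨hx', hy', ⟨hxy, hperp⟩ | ⟨hyx, hperp⟩⟩ := h
  · exact ⟨hx, hy, .inl ⟨hxy, (hag x ⟨hx, hx'⟩ y ⟨hy, hy'⟩ hxy).trans hperp⟩⟩
  · exact ⟨hx, hy, .inr ⟨hyx, (hag y ⟨hy, hy'⟩ x ⟨hx, hx'⟩ hyx).trans hperp⟩⟩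

def JointGe (r s : VCond O μ) (x y : O) : Prop := r.Ge x y ∨ s.Ge x y

def JointPerp (r s : VCond O μ) (x y : O) : Prop := r.Perp x y ∨ s.Perp x y

def AmalgGe (r s : VCond O μ) (x y : O) : Prop :=
  JointGe r s x y ∨ ∃ c ∈ r.w ∩ s.w, JointGe r s x c ∧ JointGe r s c y

def AmalgPerp (r s : VCond O μ) (x y : O) : Prop :=
  JointPerp r s x y ∨ ∃ c ∈ r.w ∩ s.w,
    JointPerp r s x c ∧ JointGe r s c y ∨ JointGe r s c x ∧ JointPerp r s c y

theorem JointGe.swap (h : JointGe r s x y) : JointGe s r x y := Or.symm h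

theorem JointPerp.swap (h : JointPerp r s x y) : JointPerp s r x y := Or.symm h

theorem AmalgGe.swap (h : AmalgGe r s x y) : AmalgGe s r x y := by
  rcases h with h | ⟨c, hc, hxc, hcy⟩
  exacts [.inl h.swap, .inr ⟨c, ⟨hc.2, hc.1⟩, hxc.swap, hcy.swap⟩]

theorem AmalgPerp.swap (h : AmalgPerp r s x y) : AmalgPerp s r x y := by
  rcases h with h | ⟨c, hc, ⟨hxc, hcy⟩ | ⟨hcx, hcy⟩⟩
  exacts [.inl h.swap, .inr ⟨c, ⟨hc.2, hc.1⟩, .inl ⟨hxc.swap, hcy.swap⟩⟩,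
    .inr ⟨c, ⟨hc.2, hc.1⟩, .inr ⟨hcx.swap, hcy.swap⟩⟩]

theorem JointPerp.symm (h : JointPerp r s x y) : JointPerp r s y x := h.imp Perp.symm Perp.symm

theorem AmalgPerp.symm (h : AmalgPerp r s x y) : AmalgPerp r s y x := by
  rcases h with h | ⟨c, hc, ⟨hxc, hcy⟩ | ⟨hcx, hcy⟩⟩
  exacts [.inl h.symm, .inr ⟨c, hc, .inr ⟨hcy, hxc.symm⟩⟩, .inr ⟨c, hc, .inl ⟨hcy.symm, hcx⟩⟩]

theorem JointGe.ge_left (hag : Agree r s) (h : JointGe r s x y) (hx : x ∈ r.w) (hy : y ∈ r.w) :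
    r.Ge x y :=
  h.elim id fun h => h.of_agree hag hx hy

theorem JointPerp.perp_left (hag : Agree r s) (h : JointPerp r s x y) (hx : x ∈ r.w)
    (hy : y ∈ r.w) : r.Perp x y :=
  h.elim id fun h => h.of_agree hag hx hy

theorem AmalgGe.ge_left (hag : Agree r s) (h : AmalgGe r s x y) (hx : x ∈ r.w) (hy : y ∈ r.w) :
    r.Ge x y := by
  rcases h with h | ⟨c, hc, hxc, hcy⟩
  exacts [h.ge_left hag hx hy, (hxc.ge_left hag hx hc.1).trans (hcy.ge_left hag hc.1 hy)]

theorem AmalgPerp.perp_left (hag : Agree r s) (h : AmalgPerp r s x y) (hx : x ∈ r.w)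
    (hy : y ∈ r.w) : r.Perp x y := by
  rcases h with h | ⟨c, hc, ⟨hxc, hcy⟩ | ⟨hcx, hcy⟩⟩
  · exact h.perp_left hag hx hy
  · exact (hxc.perp_left hag hx hc.1).trans_ge (hcy.ge_left hag hc.1 hy)
  · exact ((hcy.perp_left hag hc.1 hy).symm.trans_ge (hcx.ge_left hag hc.1 hx)).symm

theorem AmalgGe.ge_right (hag : Agree r s) (h : AmalgGe r s x y) (hx : x ∈ s.w)
    (hy : y ∈ s.w) : s.Ge x y :=
  h.swap.ge_left hag.symm hx hy

theorem AmalgPerp.perp_right (hag : Agree r s) (h : AmalgPerp r s x y) (hx : x ∈ s.w)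
    (hy : y ∈ s.w) : s.Perp x y :=
  h.swap.perp_left hag.symm hx hy

theorem JointGe.trans_of_mem (hag : Agree r s) (h₁ : JointGe r s x y) (h₂ : JointGe r s y z)
    (hx : x ∈ r.w ∩ s.w) : JointGe r s x z := by
  rcases h₂ with h₂ | h₂
  exacts [.inl ((h₁.ge_left hag hx.1 h₂.1).trans h₂),
    .inr ((h₁.swap.ge_left hag.symm hx.2 h₂.1).trans h₂)]

theorem JointPerp.trans_ge_of_mem (hag : Agree r s) (h₁ : JointPerp r s x y)
    (h₂ : JointGe r s y z) (hx : x ∈ r.w ∩ s.w) : JointPerp r s x z := by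
  rcases h₂ with h₂ | h₂
  exacts [.inl ((h₁.perp_left hag hx.1 h₂.1).trans_ge h₂),
    .inr ((h₁.swap.perp_left hag.symm hx.2 h₂.1).trans_ge h₂)]

theorem JointGe.amalgGe_trans (h₁ : JointGe r s x y) (h₂ : JointGe r s y z) :
    AmalgGe r s x z := by
  rcases h₁ with h₁ | h₁ <;> rcases h₂ with h₂ | h₂
  · exact .inl (.inl (h₁.trans h₂))
  · exact .inr ⟨y, ⟨h₁.2.1, h₂.1⟩, .inl h₁, .inr h₂⟩
  · exact .inr ⟨y, ⟨h₂.1, h₁.2.1⟩, .inr h₁, .inl h₂⟩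
  · exact .inl (.inr (h₁.trans h₂))

theorem JointPerp.amalgPerp_trans_ge (h₁ : JointPerp r s x y) (h₂ : JointGe r s y z) :
    AmalgPerp r s x z := by
  rcases h₁ with h₁ | h₁ <;> rcases h₂ with h₂ | h₂
  · exact .inl (.inl (h₁.trans_ge h₂))
  · exact .inr ⟨y, ⟨h₁.2.1, h₂.1⟩, .inl ⟨.inl h₁, .inr h₂⟩⟩
  · exact .inr ⟨y, ⟨h₂.1, h₁.2.1⟩, .inl ⟨.inr h₁, .inl h₂⟩⟩
  · exact .inl (.inr (h₁.trans_ge h₂))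

theorem AmalgGe.trans_jointGe (hag : Agree r s) (h₁ : AmalgGe r s x y) (h₂ : JointGe r s y z) :
    AmalgGe r s x z := by
  rcases h₁ with h₁ | ⟨c, hc, hxc, hcy⟩
  exacts [h₁.amalgGe_trans h₂, .inr ⟨c, hc, hxc, hcy.trans_of_mem hag h₂ hc⟩]

theorem AmalgGe.trans (hag : Agree r s) (h₁ : AmalgGe r s x y) (h₂ : AmalgGe r s y z) :
    AmalgGe r s x z := by
  rcases h₂ with h₂ | ⟨c, -, hyc, hcz⟩
  exacts [h₁.trans_jointGe hag h₂, (h₁.trans_jointGe hag hyc).trans_jointGe hag hcz]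

theorem AmalgPerp.trans_jointGe (hag : Agree r s) (h₁ : AmalgPerp r s x y)
    (h₂ : JointGe r s y z) : AmalgPerp r s x z := by
  rcases h₁ with h₁ | ⟨c, hc, ⟨hxc, hcy⟩ | ⟨hcx, hcy⟩⟩
  · exact h₁.amalgPerp_trans_ge h₂
  · exact .inr ⟨c, hc, .inl ⟨hxc, hcy.trans_of_mem hag h₂ hc⟩⟩
  · exact .inr ⟨c, hc, .inr ⟨hcx, hcy.trans_ge_of_mem hag h₂ hc⟩⟩

theorem AmalgPerp.trans_ge (hag : Agree r s) (h₁ : AmalgPerp r s x y) (h₂ : AmalgGe r s y z) :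
    AmalgPerp r s x z := by
  rcases h₂ with h₂ | ⟨c, -, hyc, hcz⟩
  exacts [h₁.trans_jointGe hag h₂, (h₁.trans_jointGe hag hyc).trans_jointGe hag hcz]

theorem AmalgPerp.not_jointGe (hag : Agree r s) (hp : AmalgPerp r s x y)
    (hg : JointGe r s x y) : False :=
  hg.elim (fun h => (hp.perp_left hag h.1 h.2.1).not_ge h)
    (fun h => (hp.perp_right hag h.1 h.2.1).not_ge h)

/-- For `x ≥ c ≥ y` through the common domain, `y ⊥ x ≥ c` gives `y ⊥ c` against `c ≥ y`,
and both of these live in one of `r`, `s`. -/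
theorem AmalgPerp.not_amalgGe (hag : Agree r s) (hp : AmalgPerp r s x y)
    (hg : AmalgGe r s x y) : False := by
  rcases hg with hg | ⟨c, -, hxc, hcy⟩
  · exact hp.not_jointGe hag hg
  · exact (hp.symm.trans_jointGe hag hxc).symm.not_jointGe hag hcy

theorem amalgGe_iff_left (hag : Agree r s) (hx : x ∈ r.w) (hy : y ∈ r.w) :
    AmalgGe r s x y ↔ r.Ge x y :=
  ⟨fun h => h.ge_left hag hx hy, fun h => .inl (.inl h)⟩

theorem amalgGe_iff_right (hag : Agree r s) (hx : x ∈ s.w) (hy : y ∈ s.w) :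
    AmalgGe r s x y ↔ s.Ge x y :=
  ⟨fun h => h.ge_right hag hx hy, fun h => .inl (.inr h)⟩

theorem amalgPerp_iff_left (hag : Agree r s) (hx : x ∈ r.w) (hy : y ∈ r.w) :
    AmalgPerp r s x y ↔ r.Perp x y :=
  ⟨fun h => h.perp_left hag hx hy, fun h => .inl (.inl h)⟩

theorem amalgPerp_iff_right (hag : Agree r s) (hx : x ∈ s.w) (hy : y ∈ s.w) :
    AmalgPerp r s x y ↔ s.Perp x y :=
  ⟨fun h => h.perp_right hag hx hy, fun h => .inl (.inr h)⟩

open Classical in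
noncomputable def amalgVal (r s : VCond O μ) (x y : O) : VVal :=
  if AmalgGe r s x y then .ge else if AmalgPerp r s x y then .perp else .und

theorem amalgVal_eq_ge_iff : amalgVal r s x y = .ge ↔ AmalgGe r s x y := by
  unfold amalgVal
  split_ifs <;> simp_all

theorem amalgVal_eq_perp_iff (hag : Agree r s) : amalgVal r s x y = .perp ↔ AmalgPerp r s x y := by
  unfold amalgVal
  split_ifs with hg hp
  · exact iff_of_false nofun fun hp => hp.not_amalgGe hag hg
  · exact iff_of_true rfl hp
  · exact iff_of_false nofun hp

theorem _root_.VVal.eq_of_iff {a b : VVal} (hge : a = .ge ↔ b = .ge)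
    (hperp : a = .perp ↔ b = .perp) : a = b := by
  cases a <;> cases b <;> simp_all

theorem amalgVal_eq_left (hag : Agree r s) (hx : x ∈ r.w) (hy : y ∈ r.w) (hxy : x < y) :
    amalgVal r s x y = r.p x y :=
  VVal.eq_of_iff
    (by rw [amalgVal_eq_ge_iff, amalgGe_iff_left hag hx hy, ge_iff hx hy hxy])
    (by rw [amalgVal_eq_perp_iff hag, amalgPerp_iff_left hag hx hy, perp_iff hx hy hxy])

theorem amalgVal_eq_right (hag : Agree r s) (hx : x ∈ s.w) (hy : y ∈ s.w) (hxy : x < y) :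
    amalgVal r s x y = s.p x y :=
  VVal.eq_of_iff
    (by rw [amalgVal_eq_ge_iff, amalgGe_iff_right hag hx hy, ge_iff hx hy hxy])
    (by rw [amalgVal_eq_perp_iff hag, amalgPerp_iff_right hag hx hy, perp_iff hx hy hxy])

noncomputable def amalg (hμ : ℵ₀ ≤ μ) (hag : Agree r s) : VCond O μ where
  w := r.w ∪ s.w
  small := (mk_union_le _ _).trans_lt (add_lt_of_lt hμ r.small s.small)
  p := amalgVal r s
  trans_ge _ _ _ _ _ _ _ _ := by
    simp only [amalgVal_eq_ge_iff]
    exact fun hij hjk => hij.trans hag hjk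
  mix1 _ _ _ _ _ _ _ _ := by
    simp only [amalgVal_eq_ge_iff, amalgVal_eq_perp_iff hag]
    exact fun hij hik => hij.symm.trans_ge hag hik
  mix2 _ _ _ _ _ _ _ _ := by
    simp only [amalgVal_eq_ge_iff, amalgVal_eq_perp_iff hag]
    exact fun hij hik => (hik.symm.trans_ge hag hij).symm
  mix3 _ _ _ _ _ _ _ _ := by
    simp only [amalgVal_eq_ge_iff, amalgVal_eq_perp_iff hag]
    exact fun hij hjk => hij.trans_ge hag hjk

theorem amalg_extends_left (hμ : ℵ₀ ≤ μ) (hag : Agree r s) : (amalg hμ hag).Extends r :=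
  ⟨Set.subset_union_left, fun _ hx _ hy hxy => amalgVal_eq_left hag hx hy hxy⟩

theorem amalg_extends_right (hμ : ℵ₀ ≤ μ) (hag : Agree r s) : (amalg hμ hag).Extends s :=
  ⟨Set.subset_union_right, fun _ hx _ hy hxy => amalgVal_eq_right hag hx hy hxy⟩

end VCond

theorem VCond_compatible_of_agree_general (μ lam : Cardinal.{u}) (hinf : ℵ₀ ≤ μ)
    (p q : VCond lam.ord.ToType μ)
    (hagree : ∀ i ∈ p.w ∩ q.w, ∀ j ∈ p.w ∩ q.w, i < j → p.p i j = q.p i j) :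
    ∃ t : VCond lam.ord.ToType μ, t.Extends p ∧ t.Extends q :=
  ⟨.amalg hinf hagree, VCond.amalg_extends_left hinf hagree, VCond.amalg_extends_right hinf hagree⟩

/-- Proposition 4.4: two conditions of `ℙ(λ,μ)` coinciding on the intersection of their
domains are compatible. -/
theorem VCond_compatible_of_agree (μ lam : Cardinal.{u}) (hμ : μ ^< μ = μ)
    (hinf : ℵ₀ ≤ μ) (hlt : μ < lam) (hreg : lam.IsRegular)
    (p q : VCond lam.ord.ToType μ)
    (hagree : ∀ i ∈ p.w ∩ q.w, ∀ j ∈ p.w ∩ q.w, i < j → p.p i j = q.p i j) :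
    ∃ t : VCond lam.ord.ToType μ, t.Extends p ∧ t.Extends q :=
  VCond_compatible_of_agree_general μ lam hinf p q hagree
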